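/- arXiv:1302.5394 — 4 statements merged into one kernel-verified Lean document; each statement's English description precedes it below -/
import Mathlib

section
/- Let r, s, n be positive integers, let X = (X^1,...,X^r) be a nonzero vector in (Z_r ∪ {0})^n, and let σ be a permutation of [n]. For each j ∈ [r], let Y^{1j},...,Y^{sj} be pairwise disjoint subsets of X^j, let Y_j = (Y^{1j},...,Y^{sj}) be the corresponding vector in (Z_s ∪ {0})^n, and let Z = (Y^{11},...,Y^{s1},...,Y^{1r},...,Y^{sr}) be the corresponding vector in (Z_{rs} ∪ {0})^n. Then alt_σ(Z) ≥ Σ_{j=1}^r alt_{σ|_{X^j}}(Y_j), where alt_{σ|_{X^j}}(Y_j) is the alternation of Y_j computed along the positions of X^j taken in the order induced by σ. -/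
open Finset

/-- `l` is (the index list of) an alternating subsequence of
`(X (σ 1), ..., X (σ n))`: indices are increasing, all chosen entries are nonzero
(`≠ none`), and any two consecutive chosen entries differ. -/
def IsAltList {α : Type*} (n : ℕ) (σ : Equiv.Perm (Fin n))
    (X : Fin n → Option α) (l : List (Fin n)) : Prop :=
  l.Chain' (· < ·) ∧ (∀ i ∈ l, X (σ i) ≠ none) ∧
    l.Chain' (fun i j => X (σ i) ≠ X (σ j))

/-- `alt_σ(X)`: maximum length of an alternating subsequence of nonzero entries of
`(X (σ 1), ..., X (σ n))`. -/
noncomputable def altVec {α : Type*} (n : ℕ) (σ : Equiv.Perm (Fin n))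
    (X : Fin n → Option α) : ℕ :=
  sSup {k | ∃ l : List (Fin n), IsAltList n σ X l ∧ l.length = k}

open Classical in
/-- The signed vector (with symbol set `ι`) encoded by a tuple `S` of (pairwise disjoint)
subsets of `[n]`: position `a` carries the symbol `j` with `a ∈ S j`, and `0` (i.e. `none`)
if `a` lies in no `S j`. -/
noncomputable def vecOfTuple {ι : Type*} (n : ℕ) (S : ι → Finset (Fin n)) :
    Fin n → Option ι := fun a =>
  if h : ∃ j, a ∈ S j then some h.choose else none

/-!
Choose an optimal alternating subsequence of `Y_j` for every `j`. Their index sets lie in the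
pairwise disjoint sets `X^j`, so their union has the sum of their lengths, and it is alternating
for `Z`: two consecutive entries of the union coming from different `j` carry symbols of
different blocks, and two coming from the same `j` are already consecutive in the subsequence
chosen for `Y_j`, hence carry different symbols of that block.
-/

open Function

theorem List.SortedLT.isChain_iff {α : Type*} [LinearOrder α] {R : α → α → Prop}
    {l : List α} (hl : l.SortedLT) :
    l.IsChain R ↔
      ∀ x ∈ l, ∀ y ∈ l, x < y → (∀ z ∈ l, x < z → y ≤ z) → R x y := by
  rw [List.isChain_iff_getElem]
  constructor
  · intro h x hx y hy hxy hsucc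
    obtain ⟨i, hi, rfl⟩ := List.getElem_of_mem hx
    obtain ⟨j, hj, rfl⟩ := List.getElem_of_mem hy
    have hij : i < j := hl.getElem_lt_getElem_iff.mp hxy
    have hji : j ≤ i + 1 := hl.getElem_le_getElem_iff.mp <|
      hsucc _ (List.getElem_mem (n := i + 1) (by omega))
        (hl.getElem_lt_getElem_iff.mpr (by omega))
    obtain rfl : j = i + 1 := by omega
    exact h i hj
  · intro h i hi
    refine h _ (List.getElem_mem _) _ (List.getElem_mem _)
      (hl.getElem_lt_getElem_iff.mpr (by omega)) fun z hz hlt => ?_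
    obtain ⟨m, hm, rfl⟩ := List.getElem_of_mem hz
    have := hl.getElem_lt_getElem_iff.mp hlt
    exact hl.getElem_le_getElem_iff.mpr (by omega)

section Alternation

variable {α : Type*} {n : ℕ} {σ : Equiv.Perm (Fin n)} {X : Fin n → Option α}

lemma IsAltList.sortedLT {l : List (Fin n)} (h : IsAltList n σ X l) : l.SortedLT :=
  (List.isChain_iff_pairwise.mp h.1).sortedLT

lemma IsAltList.ne_of_lt_of_forall_le {l : List (Fin n)} (h : IsAltList n σ X l)
    {x y : Fin n} (hx : x ∈ l) (hy : y ∈ l) (hxy : x < y)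
    (hsucc : ∀ z ∈ l, x < z → y ≤ z) :
    X (σ x) ≠ X (σ y) :=
  h.sortedLT.isChain_iff.mp h.2.2 x hx y hy hxy hsucc

lemma isAltList_sort {T : Finset (Fin n)} (hT : ∀ x ∈ T, X (σ x) ≠ none)
    (hsucc : ∀ x ∈ T, ∀ y ∈ T, x < y → (∀ z ∈ T, x < z → y ≤ z) →
      X (σ x) ≠ X (σ y)) :
    IsAltList n σ X (T.sort (· ≤ ·)) := by
  have hsort := T.sortedLT_sort
  refine ⟨List.isChain_iff_pairwise.mpr hsort.pairwise, fun x hx => hT x (by simpa using hx),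
    hsort.isChain_iff.mpr ?_⟩
  simp only [mem_sort]
  exact hsucc

lemma altVec_bddAbove :
    BddAbove {k | ∃ l : List (Fin n), IsAltList n σ X l ∧ l.length = k} := by
  refine ⟨n, ?_⟩
  rintro k ⟨l, hl, rfl⟩
  simpa using hl.sortedLT.nodup.length_le_card

lemma exists_isAltList_length_eq_altVec : ∃ l, IsAltList n σ X l ∧ l.length = altVec n σ X :=
  Nat.sSup_mem (s := {k | ∃ l, IsAltList n σ X l ∧ l.length = k})
    ⟨0, [], ⟨List.isChain_nil, by simp, List.isChain_nil⟩, rfl⟩ altVec_bddAbove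

lemma IsAltList.length_le_altVec {l : List (Fin n)} (h : IsAltList n σ X l) :
    l.length ≤ altVec n σ X :=
  le_csSup altVec_bddAbove ⟨l, h, rfl⟩

theorem sum_altVec_le_altVec {ι : Type*} [Fintype ι] (V : ι → Fin n → Option α)
    (Z : Fin n → Option (ι × α)) (hZ : ∀ j a b, V j a = some b → Z a = some (j, b)) :
    ∑ j, altVec n σ (V j) ≤ altVec n σ Z := by
  classical
  choose l hl hlen using fun j => exists_isAltList_length_eq_altVec (σ := σ) (X := V j)
  have hsome : ∀ j, ∀ x ∈ l j, ∃ b, V j (σ x) = some b := fun j x hx =>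
    Option.ne_none_iff_exists'.mp ((hl j).2.1 x hx)
  have hdisj : Set.PairwiseDisjoint (Set.univ : Set ι) fun j => (l j).toFinset := by
    intro j _ j' _ hne
    refine Finset.disjoint_left.mpr fun x hx hx' => hne ?_
    obtain ⟨b, hb⟩ := hsome j x (List.mem_toFinset.mp hx)
    obtain ⟨b', hb'⟩ := hsome j' x (List.mem_toFinset.mp hx')
    exact congrArg Prod.fst (Option.some.inj ((hZ j _ b hb).symm.trans (hZ j' _ b' hb')))
  set T := univ.biUnion fun j => (l j).toFinset
  have hT : ∀ x, x ∈ T ↔ ∃ j, x ∈ l j := by simp [T]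
  have hcard : #T = ∑ j, (l j).length := by
    rw [card_biUnion (by simpa using hdisj)]
    exact sum_congr rfl fun j _ => List.toFinset_card_of_nodup (hl j).sortedLT.nodup
  have hZT : IsAltList n σ Z (T.sort (· ≤ ·)) := by
    refine isAltList_sort (fun x hx => ?_) (fun x hx y hy hxy hsucc => ?_)
    · obtain ⟨j, hj⟩ := (hT x).mp hx
      obtain ⟨b, hb⟩ := hsome j x hj
      simp [hZ j _ b hb]
    · obtain ⟨j, hxj⟩ := (hT x).mp hx
      obtain ⟨j', hyj⟩ := (hT y).mp hy
      obtain ⟨b, hb⟩ := hsome j x hxj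
      obtain ⟨b', hb'⟩ := hsome j' y hyj
      rw [hZ j _ b hb, hZ j' _ b' hb']
      simp only [ne_eq, Option.some.injEq, Prod.mk.injEq, not_and]
      rintro rfl rfl
      exact (hl j).ne_of_lt_of_forall_le hxj hyj hxy
        (fun z hz => hsucc z ((hT z).mpr ⟨j, hz⟩)) (hb.trans hb'.symm)
  calc ∑ j, altVec n σ (V j) = ∑ j, (l j).length := by simp only [hlen]
    _ = (T.sort (· ≤ ·)).length := by rw [length_sort, hcard]
    _ ≤ altVec n σ Z := hZT.length_le_altVec

end Alternation

section Tuples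

variable {ι : Type*} {n : ℕ} {S : ι → Finset (Fin n)} {a : Fin n} {j : ι}

lemma mem_of_vecOfTuple_eq_some (h : vecOfTuple n S a = some j) : a ∈ S j := by
  unfold vecOfTuple at h
  split_ifs at h with hex
  exact Option.some_injective _ h ▸ hex.choose_spec

lemma vecOfTuple_eq_some (hS : Pairwise (Disjoint on S)) (ha : a ∈ S j) :
    vecOfTuple n S a = some j := by
  have hex : ∃ j, a ∈ S j := ⟨j, ha⟩
  rw [vecOfTuple, dif_pos hex, Option.some_inj]
  by_contra hne
  exact Finset.disjoint_left.mp (hS hne) hex.choose_spec ha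

end Tuples

theorem stmt2_general (n r s : ℕ) (σ : Equiv.Perm (Fin n))
    (X : Fin r → Finset (Fin n))
    (hXdisj : ∀ j j', j ≠ j' → Disjoint (X j) (X j'))
    (Y : Fin r → Fin s → Finset (Fin n))
    (hY : ∀ j i, Y j i ⊆ X j)
    (hYdisj : ∀ j, ∀ i i', i ≠ i' → Disjoint (Y j i) (Y j i')) :
    ∑ j : Fin r, altVec n σ (vecOfTuple n fun i => Y j i)
      ≤ altVec n σ (vecOfTuple n fun q : Fin r × Fin s => Y q.1 q.2) := by
  have hZdisj : Pairwise (Disjoint on fun q : Fin r × Fin s => Y q.1 q.2) := by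
    rintro ⟨j, i⟩ ⟨j', i'⟩ hne
    by_cases hj : j = j'
    · subst hj
      exact hYdisj j i i' fun hi => hne (by rw [hi])
    · exact (hXdisj j j' hj).mono (hY j i) (hY j' i')
  exact sum_altVec_le_altVec _ _ fun j a i h =>
    vecOfTuple_eq_some hZdisj (mem_of_vecOfTuple_eq_some h)

theorem stmt2 (n r s : ℕ) (hr : 1 ≤ r) (hs : 1 ≤ s) (σ : Equiv.Perm (Fin n))
    (X : Fin r → Finset (Fin n))
    (hXdisj : ∀ j j', j ≠ j' → Disjoint (X j) (X j'))
    (hX0 : ∃ j, (X j).Nonempty)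
    (Y : Fin r → Fin s → Finset (Fin n))
    (hY : ∀ j i, Y j i ⊆ X j)
    (hYdisj : ∀ j, ∀ i i', i ≠ i' → Disjoint (Y j i) (Y j i')) :
    ∑ j : Fin r, altVec n σ (vecOfTuple n fun i => Y j i)
      ≤ altVec n σ (vecOfTuple n fun q : Fin r × Fin s => Y q.1 q.2) :=
  stmt2_general n r s σ X hXdisj Y hY hYdisj
end

section
/- For every hypergraph F on vertex set [n], every integer r ≥ 2, and every permutation σ of [n], one has alt_{r,σ}(F) ≤ M_r(F), where M_r(F) is the maximum size of a subset T ⊆ [n] such that the hypergraph {A ∈ F : A ⊆ T} admits a proper r-coloring; equivalently, n − alt_r(F) ≥ cd_r(F). -/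
open Finset

/-- A proper `t`-coloring of the Kneser hypergraph `KG^r(F)`: vertices are the members of `F`,
colors are taken in `{1,...,t}`, and no set of `r` pairwise disjoint members of `F`
(an edge) is monochromatic. -/
def IsKneserColoring (n r t : ℕ) (F : Finset (Finset (Fin n)))
    (c : Finset (Fin n) → ℕ) : Prop :=
  (∀ A ∈ F, c A ∈ Finset.Icc 1 t) ∧
    ∀ E : Finset (Finset (Fin n)), E ⊆ F → E.card = r →
      ((E : Set (Finset (Fin n))).Pairwise fun A B => Disjoint A B) →
      ¬ ∃ i, ∀ A ∈ E, c A = i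

/-- The chromatic number of the Kneser hypergraph `KG^r(F)`. -/
noncomputable def kneserChrom (n r : ℕ) (F : Finset (Finset (Fin n))) : ℕ :=
  sInf {t | ∃ c, IsKneserColoring n r t F c}

/-- `alt_{r,σ}(F)`: the largest `ℓ` such that some nonzero `X ∈ (Z_r ∪ {0})^n` has
`alt_σ(X) = ℓ` and no `X^j` contains a member of `F`. -/
noncomputable def altHyp (n r : ℕ) (σ : Equiv.Perm (Fin n))
    (F : Finset (Finset (Fin n))) : ℕ :=
  sSup {k | ∃ X : Fin n → Option (Fin r), (∃ a, X a ≠ none) ∧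
    altVec n σ X = k ∧ ∀ j : Fin r, ∀ A ∈ F, ¬ ∀ a ∈ A, X a = some j}

/-- `alt_r(F) = min_σ alt_{r,σ}(F)`. -/
noncomputable def altNum (n r : ℕ) (F : Finset (Finset (Fin n))) : ℕ :=
  sInf {k | ∃ σ : Equiv.Perm (Fin n), altHyp n r σ F = k}

/-- The hypergraph `F` (on vertex set `[n]`) admits a proper coloring with `r` colors:
no member of `F` is monochromatic. -/
def HypColorable (n r : ℕ) (F : Finset (Finset (Fin n))) : Prop :=
  ∃ c : Fin n → Fin r, ∀ A ∈ F, ¬ ∃ j, ∀ a ∈ A, c a = j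

open Classical in
/-- `M_r(F)`: the maximum size of a subset `T ⊆ [n]` such that the hypergraph
`{A ∈ F : A ⊆ T}` admits a proper `r`-coloring. -/
noncomputable def Mr (n r : ℕ) (F : Finset (Finset (Fin n))) : ℕ :=
  sSup {k | ∃ T : Finset (Fin n), T.card = k ∧
    HypColorable n r (F.filter fun A => A ⊆ T)}

/-- The `r`-colorability defect `cd_r(F) = n - M_r(F)`. -/
noncomputable def cdr (n r : ℕ) (F : Finset (Finset (Fin n))) : ℕ := n - Mr n r F

theorem stmt4 (n r : ℕ) (hr : 2 ≤ r) (F : Finset (Finset (Fin n)))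
    (hF : ∀ A ∈ F, A.Nonempty) :
    (∀ σ : Equiv.Perm (Fin n), altHyp n r σ F ≤ Mr n r F) ∧
      cdr n r F ≤ n - altNum n r F := by
  classical
  have key : ∀ σ : Equiv.Perm (Fin n), altHyp n r σ F ≤ Mr n r F := by
    intro σ
    apply csSup_le'
    rintro k ⟨X, ⟨a0, ha0⟩, hvec, hcol⟩
    set T : Finset (Fin n) := Finset.univ.filter (fun a => X a ≠ none) with hT
    have hkT : k ≤ T.card := by
      rw [← hvec]
      apply csSup_le'
      rintro m ⟨l, ⟨hchain, hnz, _⟩, rfl⟩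
      have hnd : l.Nodup :=
        ((List.isChain_iff_pairwise.mp hchain).imp fun h => ne_of_lt h)
      calc l.length = l.toFinset.card := (List.toFinset_card_of_nodup hnd).symm
        _ = (l.toFinset.image σ).card :=
            (Finset.card_image_of_injective _ σ.injective).symm
        _ ≤ T.card := Finset.card_le_card (by
            intro x hx
            simp only [Finset.mem_image, List.mem_toFinset] at hx
            obtain ⟨i, hi, rfl⟩ := hx
            simp [hT, hnz i hi])
    refine hkT.trans (le_csSup ⟨n, ?_⟩ ⟨T, rfl, ?_⟩)
    · rintro m ⟨S, rfl, -⟩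
      exact (Finset.card_le_univ S).trans (by simp)
    · refine ⟨fun a => (X a).getD ⟨0, by omega⟩, ?_⟩
      rintro A hA ⟨j, hj⟩
      apply hcol j A (Finset.mem_filter.mp hA).1
      intro a ha
      have haT : a ∈ T := (Finset.mem_filter.mp hA).2 ha
      have hX : X a ≠ none := (Finset.mem_filter.mp haT).2
      obtain ⟨b, hb⟩ := Option.ne_none_iff_exists'.mp hX
      have hj' : (X a).getD ⟨0, by omega⟩ = j := hj a ha
      rw [hb, Option.getD_some] at hj'
      rw [hb, hj']
  refine ⟨key, ?_⟩
  have hle : altNum n r F ≤ Mr n r F := by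
    have h1 : altNum n r F ≤ altHyp n r 1 F :=
      csInf_le (OrderBot.bddBelow _) ⟨1, rfl⟩
    exact h1.trans (key 1)
  exact Nat.sub_le_sub_left hle n
end

section
/- Let k, r, n, m be positive integers with r ≥ 2, let π = (P_1,...,P_m) be a partition of [n], and let s = (s_1,...,s_m) be a vector of positive integers with s_i ≤ |P_i| for all i and k ≤ s_1 + ... + s_m. Then χ(KG^r(π; s; k)) ≤ max{1, ⌈(n − M_{r,π}) / (r − 1) + 1⌉}. -/
open Finset

/-- `P` is a partition of `[n]` (identified with `Fin n`) into `m` blocks. -/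
def IsPartition (n m : ℕ) (P : Fin m → Finset (Fin n)) : Prop :=
  (∀ i, (P i).Nonempty) ∧ (∀ i j, i ≠ j → Disjoint (P i) (P j)) ∧
    ∀ a : Fin n, ∃ i, a ∈ P i

open Classical in
/-- The vertex set of the multiple Kneser hypergraph `KG^r(π; s; k)`:
all `k`-subsets `A` of `[n]` with `|A ∩ P i| ≤ s i` for all `i`. -/
noncomputable def multiKneserVerts (n m k : ℕ) (P : Fin m → Finset (Fin n))
    (s : Fin m → ℕ) : Finset (Finset (Fin n)) :=
  Finset.univ.filter fun A => A.card = k ∧ ∀ i, (A ∩ P i).card ≤ s i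

/-- `f_{r,π}(P i) = r * s i` if `|P i| ≥ r * s i`, and `|P i|` otherwise. -/
def frpi (n m r : ℕ) (P : Fin m → Finset (Fin n)) (s : Fin m → ℕ) (i : Fin m) : ℕ :=
  if r * s i ≤ (P i).card then r * s i else (P i).card

/-- `M_{r,π}`: the maximum, over all subsets `S ⊆ [m]` with
`∑_{i ∈ S} f_{r,π}(P i) ≤ rk - 1`, of `rk - 1 + ∑_{i ∈ S} (|P i| - f_{r,π}(P i))`. -/
noncomputable def Mrpi (n m r k : ℕ) (P : Fin m → Finset (Fin n)) (s : Fin m → ℕ) : ℕ :=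
  sSup {v | ∃ S : Finset (Fin m), (∑ i ∈ S, frpi n m r P s i) ≤ r * k - 1 ∧
    v = r * k - 1 + ∑ i ∈ S, ((P i).card - frpi n m r P s i)}


/-!
Take an optimal selection `S` in the definition of `M_{r,π}` and let `W = ⋃_{i ∈ S} P_i`. Enlarge
`W` by at most `rk - 1 - ∑_{i ∈ S} f_{r,π}(P_i)` further points to a set `T` with
`|T| = min(n, M_{r,π})`. The union `B` of `r` pairwise disjoint vertices has `rk` points, while each
vertex meets `P_i` in at most `s_i` points, so `|B ∩ P_i| ≤ f_{r,π}(P_i)`; counting shows that `B`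
cannot lie inside `T`. Hence the vertices contained in `T` may share one colour. Split the
`n - |T|` points outside `T` into `⌈(n - M_{r,π}) / (r - 1)⌉` groups of size at most `r - 1` and
colour every other vertex by the group of its least point outside `T`: `r` pairwise disjoint
vertices have distinct least points, so they cannot all fall into one group.
-/

section Fibers

variable {α : Type*}

lemma Finset.exists_injOn_lt_card (U : Finset α) :
    ∃ e : α → ℕ, Set.InjOn e U ∧ ∀ x ∈ U, e x < #U := by
  classical
  refine ⟨fun x => if hx : x ∈ U then U.equivFin ⟨x, hx⟩ else 0, ?_, fun x hx => by simp [hx]⟩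
  intro x hx y hy hxy
  simp only [mem_coe] at hx hy
  simpa [hx, hy, Fin.val_inj] using hxy

lemma Finset.exists_lt_forall_card_fiber_le (U : Finset α) {q d : ℕ} (hd : 0 < d)
    (hU : #U ≤ q * d) : ∃ g : α → ℕ, (∀ x ∈ U, g x < q) ∧ ∀ j, #{x ∈ U | g x = j} ≤ d := by
  obtain ⟨e, he_inj, he_lt⟩ := U.exists_injOn_lt_card
  refine ⟨fun x => e x / d, fun x hx => Nat.div_lt_of_lt_mul ?_, fun j => ?_⟩
  · rw [mul_comm]
    exact (he_lt x hx).trans_le hU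
  calc #{x ∈ U | e x / d = j} ≤ #(Ico (j * d) (j * d + d)) := by
        refine card_le_card_of_injOn e (fun x hx => ?_) (he_inj.mono (filter_subset _ _))
        have := (Nat.div_eq_iff hd).1 (mem_filter.1 hx).2
        simp only [coe_Ico, Set.mem_Ico]
        omega
    _ = d := by simp

end Fibers

lemma Finset.card_le_card_of_pairwise_disjoint_meets {α : Type*} {E : Finset (Finset α)}
    {X : Finset α} (hE : (E : Set (Finset α)).Pairwise (fun A B => Disjoint A B))
    (hX : ∀ A ∈ E, ∃ x ∈ X, x ∈ A) : #E ≤ #X :=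
  card_le_card_of_forall_subsingleton (fun A x => x ∈ A) hX fun _ _ _ hA _ hB =>
    by_contra fun hAB => disjoint_left.1 (hE hA.1 hB.1 hAB) hA.2 hB.2

def SpansNoEdge {α : Type*} (r : ℕ) (F : Finset (Finset α)) (T : Finset α) : Prop :=
  ∀ E ⊆ F, #E = r → (E : Set (Finset α)).Pairwise (fun A B => Disjoint A B) → ¬ ∀ A ∈ E, A ⊆ T

theorem kneserChrom_le_of_spansNoEdge {n r q : ℕ} (hr : 2 ≤ r) {F : Finset (Finset (Fin n))}
    {T : Finset (Fin n)} (hT : SpansNoEdge r F T) (hq : #Tᶜ ≤ q * (r - 1)) :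
    kneserChrom n r F ≤ q + 1 := by
  classical
  obtain ⟨g, hg_lt, hg_fiber⟩ := Tᶜ.exists_lt_forall_card_fiber_le (by omega) hq
  have hmin_mem : ∀ A (h : (A \ T).Nonempty), (A \ T).min' h ∈ A ∧ (A \ T).min' h ∈ Tᶜ :=
    fun A h => by simpa [mem_compl] using mem_sdiff.1 ((A \ T).min'_mem h)
  let c : Finset (Fin n) → ℕ := fun A =>
    if h : (A \ T).Nonempty then g ((A \ T).min' h) + 1 else q + 1
  refine Nat.sInf_le ⟨c, fun A _ => ?_, ?_⟩
  · simp only [c, mem_Icc]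
    split_ifs with h
    · have := hg_lt _ (hmin_mem A h).2
      omega
    · omega
  rintro E hEF hEr hEpd ⟨i, hi⟩
  by_cases hET : ∀ A ∈ E, A ⊆ T
  · exact hT E hEF hEr hEpd hET
  obtain ⟨A₀, hA₀, hA₀T⟩ := not_forall₂.1 hET
  have hi_le : i ≤ q := by
    have h := sdiff_nonempty.2 hA₀T
    have := hg_lt _ (hmin_mem A₀ h).2
    simp only [← hi A₀ hA₀, c, h, dite_true]
    omega
  have hmeets : ∀ A ∈ E, ∃ x ∈ {x ∈ Tᶜ | g x = i - 1}, x ∈ A := by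
    intro A hA
    have hcA := hi A hA
    by_cases h : (A \ T).Nonempty
    · simp only [c, h, dite_true] at hcA
      exact ⟨_, mem_filter.2 ⟨(hmin_mem A h).2, by omega⟩, (hmin_mem A h).1⟩
    · simp only [c, h, dite_false] at hcA
      omega
  have := (card_le_card_of_pairwise_disjoint_meets hEpd hmeets).trans (hg_fiber (i - 1))
  omega

lemma Finset.card_le_sum_card_inter_add_card {ι α : Type*} [DecidableEq α] {B E : Finset α}
    (S : Finset ι) (P : ι → Finset α) (h : B ⊆ S.biUnion P ∪ E) :
    #B ≤ ∑ i ∈ S, #(B ∩ P i) + #E :=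
  calc #B ≤ #(B ∩ S.biUnion P ∪ E) := card_le_card fun x hx => by
          simpa [hx] using mem_union.1 (h hx)
    _ ≤ #(B ∩ S.biUnion P) + #E := card_union_le _ _
    _ ≤ ∑ i ∈ S, #(B ∩ P i) + #E := by
          rw [inter_biUnion]
          gcongr
          exact card_biUnion_le

section MultipleKneser

variable {n m k r : ℕ} {P : Fin m → Finset (Fin n)} {s : Fin m → ℕ}

lemma frpi_eq_min (i : Fin m) : frpi n m r P s i = min (r * s i) #(P i) := by
  unfold frpi
  split <;> omega

lemma frpi_le_card (i : Fin m) : frpi n m r P s i ≤ #(P i) :=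
  frpi_eq_min i ▸ min_le_right _ _

lemma exists_eq_Mrpi : ∃ S : Finset (Fin m), ∑ i ∈ S, frpi n m r P s i ≤ r * k - 1 ∧
    Mrpi n m r k P s = r * k - 1 + ∑ i ∈ S, (#(P i) - frpi n m r P s i) := by
  refine Nat.sSup_mem (s := {v | ∃ S : Finset (Fin m), ∑ i ∈ S, frpi n m r P s i ≤ r * k - 1 ∧
    v = r * k - 1 + ∑ i ∈ S, (#(P i) - frpi n m r P s i)}) ⟨_, ∅, by simp, rfl⟩
    ⟨r * k - 1 + ∑ i, #(P i), ?_⟩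
  rintro _ ⟨S, -, rfl⟩
  gcongr
  calc ∑ i ∈ S, (#(P i) - frpi n m r P s i) ≤ ∑ i ∈ S, #(P i) :=
        sum_le_sum fun i _ => Nat.sub_le _ _
    _ ≤ ∑ i, #(P i) := sum_le_sum_of_subset (subset_univ S)

lemma card_biUnion_inter_le_frpi {𝒜 : Finset (Finset (Fin n))} (h𝒜 : #𝒜 = r) {i : Fin m}
    (hs : ∀ A ∈ 𝒜, #(A ∩ P i) ≤ s i) : #(𝒜.biUnion id ∩ P i) ≤ frpi n m r P s i := by
  rw [frpi_eq_min]
  refine le_min ?_ (card_le_card inter_subset_right)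
  calc #(𝒜.biUnion id ∩ P i) = #(𝒜.biUnion (· ∩ P i)) := by rw [biUnion_inter]; rfl
    _ ≤ ∑ A ∈ 𝒜, #(A ∩ P i) := card_biUnion_le
    _ ≤ ∑ A ∈ 𝒜, s i := sum_le_sum hs
    _ = r * s i := by simp [h𝒜]

lemma spansNoEdge_biUnion_union (hk : 0 < k) (hr : 0 < r) {S : Finset (Fin m)}
    {X : Finset (Fin n)} (h : ∑ i ∈ S, frpi n m r P s i + #X ≤ r * k - 1) :
    SpansNoEdge r (multiKneserVerts n m k P s) (S.biUnion P ∪ X) := by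
  intro E hEF hEr hEpd hET
  have hE : ∀ A ∈ E, #A = k ∧ ∀ i, #(A ∩ P i) ≤ s i := fun A hA => by
    simpa [multiKneserVerts] using hEF hA
  have hB : #(E.biUnion id) = r * k :=
    calc #(E.biUnion id) = ∑ A ∈ E, #A := card_biUnion hEpd
      _ = ∑ A ∈ E, k := sum_congr rfl fun A hA => (hE A hA).1
      _ = r * k := by simp [hEr]
  have hB_le : #(E.biUnion id) ≤ ∑ i ∈ S, frpi n m r P s i + #X := by
    refine (card_le_sum_card_inter_add_card S P (biUnion_subset.2 hET)).trans ?_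
    gcongr with i
    exact card_biUnion_inter_le_frpi hEr fun A hA => (hE A hA).2 i
  have : 0 < r * k := Nat.mul_pos hr hk
  omega

theorem exists_spansNoEdge_card_eq_min (hk : 0 < k) (hr : 0 < r)
    (hP : ∀ i j, i ≠ j → Disjoint (P i) (P j)) :
    ∃ T : Finset (Fin n), #T = min n (Mrpi n m r k P s) ∧
      SpansNoEdge r (multiKneserVerts n m k P s) T := by
  obtain ⟨S, hS, hM⟩ := exists_eq_Mrpi (r := r) (k := k) (P := P) (s := s)
  rw [sum_tsub_distrib S fun i _ => frpi_le_card i] at hM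
  have hf_le : ∑ i ∈ S, frpi n m r P s i ≤ ∑ i ∈ S, #(P i) := sum_le_sum fun i _ => frpi_le_card i
  have hW : #(S.biUnion P) = ∑ i ∈ S, #(P i) := card_biUnion fun i _ j _ hij => hP i j hij
  have hWn : #(S.biUnion P) ≤ n := (card_le_univ _).trans_eq (Fintype.card_fin n)
  obtain ⟨T, hWT, hT⟩ := exists_superset_card_eq (s := S.biUnion P) (n := min n (Mrpi n m r k P s))
    (by omega) (by simp)
  refine ⟨T, hT, ?_⟩
  rw [← union_sdiff_of_subset hWT]
  apply spansNoEdge_biUnion_union hk hr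
  rw [card_sdiff_of_subset hWT]
  omega

end MultipleKneser

lemma Nat.tsub_le_ceil_div_mul {a b d : ℕ} (hd : 0 < d) :
    a - b ≤ ⌈((a : ℚ) - b) / d⌉₊ * d := by
  rcases le_total b a with hba | hab
  · have := (div_le_iff₀ (Nat.cast_pos.2 hd : (0 : ℚ) < d)).1 (Nat.le_ceil (((a : ℚ) - b) / d))
    exact_mod_cast (Nat.cast_sub hba).trans_le this
  · simp [Nat.sub_eq_zero_of_le hab]

lemma Nat.cast_ceil_add_one_eq_max {R : Type*} [Ring R] [LinearOrder R] [FloorRing R]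
    [IsOrderedRing R] (x : R) : ((⌈x⌉₊ : ℤ) + 1) = max 1 ⌈x + 1⌉ := by
  rw [← Int.ceil_toNat, Int.toNat_eq_max, Int.ceil_add_one]
  omega

theorem stmt8_general (n m k r : ℕ) (hk : 1 ≤ k) (hr : 2 ≤ r)
    (P : Fin m → Finset (Fin n)) (hP : IsPartition n m P)
    (s : Fin m → ℕ) :
    (kneserChrom n r (multiKneserVerts n m k P s) : ℤ) ≤
      max 1 ⌈((n : ℚ) - (Mrpi n m r k P s : ℚ)) / ((r : ℚ) - 1) + 1⌉ := by
  obtain ⟨-, hP_disj, -⟩ := hP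
  obtain ⟨T, hT_card, hT⟩ := exists_spansNoEdge_card_eq_min (r := r) (s := s) hk (by omega) hP_disj
  have hr₁ : (r : ℚ) - 1 = (r - 1 : ℕ) := by rw [Nat.cast_sub (by omega), Nat.cast_one]
  have hTc : #Tᶜ ≤ ⌈((n : ℚ) - Mrpi n m r k P s) / ((r : ℚ) - 1)⌉₊ * (r - 1) := by
    rw [card_compl, Fintype.card_fin, hT_card, hr₁]
    calc n - min n (Mrpi n m r k P s) ≤ n - Mrpi n m r k P s := by omega
      _ ≤ _ := Nat.tsub_le_ceil_div_mul (by omega)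
  rw [← Nat.cast_ceil_add_one_eq_max]
  exact_mod_cast kneserChrom_le_of_spansNoEdge hr hT hTc

theorem stmt8 (n m k r : ℕ) (hn : 1 ≤ n) (hm : 1 ≤ m) (hk : 1 ≤ k) (hr : 2 ≤ r)
    (P : Fin m → Finset (Fin n)) (hP : IsPartition n m P)
    (s : Fin m → ℕ) (hs : ∀ i, 1 ≤ s i) (hsP : ∀ i, s i ≤ (P i).card)
    (hks : k ≤ ∑ i, s i) :
    (kneserChrom n r (multiKneserVerts n m k P s) : ℤ) ≤
      max 1 ⌈((n : ℚ) - (Mrpi n m r k P s : ℚ)) / ((r : ℚ) - 1) + 1⌉ :=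
  stmt8_general n m k r hk hr P hP s
end

section
/- Let k, n, r, s be positive integers with n ≥ sk and s ≥ r ≥ 2. Then χ(KG^r(n,k)_{s-stab}) ≤ ⌈(n − s(k−1)) / (r − 1)⌉. -/
open Finset

/-- A subset `A` of `[n]` (identified with `Fin n`) is `s`-stable: any two distinct
elements `i, j ∈ A` satisfy `s ≤ |i - j| ≤ n - s`. -/
def Stable (n s : ℕ) (A : Finset (Fin n)) : Prop :=
  ∀ i ∈ A, ∀ j ∈ A, i ≠ j →
    s ≤ max i.val j.val - min i.val j.val ∧ max i.val j.val - min i.val j.val ≤ n - s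

open Classical in
/-- The vertex set of the `s`-stable Kneser hypergraph `KG^r(n,k)_{s-stab}`:
all `s`-stable `k`-element subsets of `[n]`. -/
noncomputable def stableSets (n s k : ℕ) : Finset (Finset (Fin n)) :=
  Finset.univ.filter fun A => A.card = k ∧ Stable n s A

lemma ceil_div_facts (a N : ℕ) (ha : 1 ≤ a) :
    N ≤ a * ((N + (a - 1)) / a) ∧ a * ((N + (a - 1)) / a) ≤ N + (a - 1) := by
  have h1 := Nat.div_add_mod (N + (a - 1)) a
  have h2 : (N + (a - 1)) % a < a := Nat.mod_lt _ ha
  generalize (N + (a - 1)) / a = q at h1 ⊢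
  generalize hq : a * q = P at h1 ⊢
  omega

lemma interval_lemma (a t N f : ℕ) (ha : 1 ≤ a) (ht1 : 1 ≤ t)
    (htop : N ≤ a * t) (hf : f + 1 ≤ N) :
    a * (min (f / a) (t - 1)) ≤ f ∧ f + 1 ≤ a * (min (f / a) (t - 1)) + a := by
  have hdm : a * (f / a) + f % a = f := Nat.div_add_mod f a
  have hm : f % a < a := Nat.mod_lt f ha
  have e1 : a * t = a * (t - 1) + a := by
    conv_lhs => rw [show t = (t - 1) + 1 by omega, Nat.mul_succ]
  rcases le_total (f / a) (t - 1) with h | h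
  · rw [min_eq_left h]
    constructor
    · exact Nat.le.intro hdm
    · have := Nat.add_lt_add_left hm (a * (f / a))
      omega
  · rw [min_eq_right h]
    constructor
    · exact le_trans (Nat.mul_le_mul_left a h) (Nat.le.intro hdm)
    · exact le_trans (le_trans hf htop) (le_of_eq e1)

lemma min_bound (n s k : ℕ) (hs : 1 ≤ s) (A : Finset (Fin n)) (hA : A.card = k)
    (hst : Stable n s A) (h : A.Nonempty) :
    (A.min' h).val + s * (k - 1) + 1 ≤ n := by
  set m := (A.min' h).val with hm
  set M := (A.max' h).val with hM
  have hmM : ∀ x ∈ A, m ≤ x.val ∧ x.val ≤ M := fun x hx => ⟨A.min'_le x hx, A.le_max' x hx⟩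
  have hmono : ∀ x ∈ A, ∀ y ∈ A, x.val < y.val → (x.val - m) / s < (y.val - m) / s := by
    intro x hx y hy hlt
    have hne : x ≠ y := by intro e; rw [e] at hlt; exact lt_irrefl _ hlt
    have hst' := (hst x hx y hy hne).1
    have h1 : x.val + s ≤ y.val := by omega
    have hx' : m ≤ x.val := (hmM x hx).1
    have h2 : x.val - m + s ≤ y.val - m := by omega
    calc (x.val - m) / s < (x.val - m) / s + 1 := Nat.lt_succ_self _
      _ = (x.val - m + s) / s := (Nat.add_div_right _ hs).symm
      _ ≤ (y.val - m) / s := Nat.div_le_div_right h2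
  have hinj : Set.InjOn (fun x : Fin n => (x.val - m) / s) A := by
    intro x hx y hy hxy
    simp only [Finset.mem_coe] at hx hy
    by_contra hne
    rcases Nat.lt_or_ge x.val y.val with hlt | hge
    · exact absurd hxy (Nat.ne_of_lt (hmono x hx y hy hlt))
    · have hvne : x.val ≠ y.val := fun e => hne (Fin.ext e)
      have : y.val < x.val := by omega
      exact absurd hxy.symm (Nat.ne_of_lt (hmono y hy x hx this))
  have hsub : ∀ x ∈ A, (x.val - m) / s ∈ Finset.range ((M - m) / s + 1) := by
    intro x hx
    simp only [Finset.mem_range, Nat.lt_succ_iff]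
    exact Nat.div_le_div_right (by have := hmM x hx; omega)
  have hcard := Finset.card_le_card_of_injOn _ hsub hinj
  rw [hA, Finset.card_range] at hcard
  have h2 : s * (k - 1) ≤ M - m := by
    have h4 : s * (k - 1) ≤ s * ((M - m) / s) :=
      Nat.mul_le_mul_left s (by generalize (M - m) / s = q at hcard ⊢; omega)
    exact le_trans h4 (Nat.mul_div_le _ _)
  have hMn : M < n := (A.max' h).isLt
  have hmm : m ≤ M := (hmM (A.max' h) (A.max'_mem h)).1
  generalize s * (k - 1) = P at h2 ⊢
  omega

theorem stmt13 (n k r s : ℕ) (hk : 1 ≤ k) (hr : 2 ≤ r) (hrs : r ≤ s) (hn : s * k ≤ n) :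
    (kneserChrom n r (stableSets n s k) : ℤ) ≤
      ⌈((n : ℚ) - (s : ℚ) * ((k : ℚ) - 1)) / ((r : ℚ) - 1)⌉ := by
  classical
  have hs1 : 1 ≤ s := by omega
  set a := r - 1 with hadef
  have ha1 : 1 ≤ a := by omega
  obtain ⟨K, hKdef⟩ : ∃ x, x = s * (k - 1) := ⟨_, rfl⟩
  have hKn : K + s ≤ n := by
    have e : s * k = K + s := by
      conv_lhs => rw [show k = (k - 1) + 1 by omega]
      rw [Nat.mul_succ, ← hKdef]
    omega
  obtain ⟨N, hNdef⟩ : ∃ x, x = n - K := ⟨_, rfl⟩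
  have hN1 : 1 ≤ N := by omega
  obtain ⟨t, htdef⟩ : ∃ x, x = (N + (a - 1)) / a := ⟨_, rfl⟩
  have hcf := ceil_div_facts a N ha1
  rw [← htdef] at hcf
  have ht1 : 1 ≤ t := by
    rcases Nat.eq_zero_or_pos t with ht0 | h1
    · rw [ht0, Nat.mul_zero] at hcf
      omega
    · exact h1
  -- the coloring
  set c : Finset (Fin n) → ℕ :=
    fun A => if h : A.Nonempty then min ((A.min' h).val / a) (t - 1) + 1 else 1 with hc
  have hmemS : ∀ A ∈ stableSets n s k, A.card = k ∧ Stable n s A := by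
    intro A hA
    simpa [stableSets] using hA
  have hcol : IsKneserColoring n r t (stableSets n s k) c := by
    constructor
    · intro A hA
      have hAne : A.Nonempty := Finset.card_pos.mp (by rw [(hmemS A hA).1]; omega)
      simp only [hc, dif_pos hAne, Finset.mem_Icc]
      generalize (A.min' hAne).val / a = q
      omega
    · intro E hE hEcard hpair
      rintro ⟨i, hi⟩
      have hmem : ∀ A ∈ E, A.card = k ∧ Stable n s A := fun A hA => hmemS A (hE hA)
      have hne : ∀ A ∈ E, A.Nonempty := fun A hA =>
        Finset.card_pos.mp (by rw [(hmem A hA).1]; omega)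
      set g : Finset (Fin n) → ℕ :=
        fun A => if h : A.Nonempty then (A.min' h).val else 0 with hg
      have hinjE : Set.InjOn g E := by
        intro A hA B hB hAB
        simp only [Finset.mem_coe] at hA hB
        by_contra hne'
        have hdisj : Disjoint A B := hpair (Finset.mem_coe.mpr hA) (Finset.mem_coe.mpr hB) hne'
        have hAne := hne A hA
        have hBne := hne B hB
        simp only [hg, dif_pos hAne, dif_pos hBne] at hAB
        have heq : A.min' hAne = B.min' hBne := Fin.ext hAB
        have h1 : A.min' hAne ∈ A := Finset.min'_mem _ _
        have h2 : A.min' hAne ∈ B := heq ▸ Finset.min'_mem _ _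
        exact (Finset.disjoint_left.mp hdisj h1) h2
      have hival : ∀ A ∈ E, a * (i - 1) ≤ g A ∧ g A + 1 ≤ a * (i - 1) + a := by
        intro A hA
        have hAne := hne A hA
        have hb := min_bound n s k hs1 A (hmem A hA).1 (hmem A hA).2 hAne
        rw [← hKdef] at hb
        have hgA : g A = (A.min' hAne).val := by simp [hg, dif_pos hAne]
        have hfN : g A + 1 ≤ N := by rw [hgA]; omega
        have hmin : min (g A / a) (t - 1) = i - 1 := by
          have hcA := hi A hA
          simp only [hc, dif_pos hAne] at hcA
          rw [hgA]
          generalize (A.min' hAne).val / a = q at hcA ⊢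
          omega
        have := interval_lemma a t N (g A) ha1 ht1 hcf.1 hfN
        rw [hmin] at this
        exact this
      have himg : Finset.image g E ⊆ Finset.Ico (a * (i - 1)) (a * (i - 1) + a) := by
        intro x hx
        simp only [Finset.mem_image] at hx
        obtain ⟨A, hA, rfl⟩ := hx
        have h := hival A hA
        exact Finset.mem_Ico.mpr ⟨h.1, h.2⟩
      have h1 : (Finset.image g E).card = r := by
        rw [Finset.card_image_of_injOn hinjE, hEcard]
      have h2 := Finset.card_le_card himg
      rw [h1, Nat.card_Ico, Nat.add_sub_cancel_left] at h2
      omega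
  have hchrom : kneserChrom n r (stableSets n s k) ≤ t := Nat.sInf_le ⟨c, hcol⟩
  -- cast to the ceiling bound
  have key : a * (t - 1) + 1 ≤ N := by
    have e1 : a * t = a * (t - 1) + a := by
      conv_lhs => rw [show t = (t - 1) + 1 by omega, Nat.mul_succ]
    have h2 := hcf.2
    generalize a * (t - 1) = P at e1 ⊢
    generalize a * t = Q at e1 h2
    omega
  have hKle : K ≤ n := by omega
  have hNq : ((N : ℚ)) = (n : ℚ) - (s : ℚ) * ((k : ℚ) - 1) := by
    rw [hNdef, Nat.cast_sub hKle, hKdef, Nat.cast_mul, Nat.cast_sub hk]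
    push_cast
    ring
  have haq : ((a : ℚ)) = (r : ℚ) - 1 := by
    rw [hadef, Nat.cast_sub (by omega : 1 ≤ r)]
    push_cast
    ring
  have harg : ((n : ℚ) - (s : ℚ) * ((k : ℚ) - 1)) / ((r : ℚ) - 1) = (N : ℚ) / (a : ℚ) := by
    rw [hNq, haq]
  rw [harg]
  have hceil : ((t : ℤ) - 1) < ⌈(N : ℚ) / (a : ℚ)⌉ := by
    rw [Int.lt_ceil]
    have hapos : (0 : ℚ) < (a : ℚ) := by exact_mod_cast ha1
    rw [lt_div_iff₀ hapos]
    have kq : ((a : ℚ)) * ((t : ℚ) - 1) + 1 ≤ (N : ℚ) := by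
      have h := key
      have h' : ((a * (t - 1) + 1 : ℕ) : ℚ) ≤ ((N : ℕ) : ℚ) := by exact_mod_cast h
      rwa [Nat.cast_add, Nat.cast_mul, Nat.cast_sub ht1, Nat.cast_one] at h'
    push_cast
    linarith
  have : (t : ℤ) ≤ ⌈(N : ℚ) / (a : ℚ)⌉ := by omega
  calc ((kneserChrom n r (stableSets n s k) : ℤ)) ≤ (t : ℤ) := by exact_mod_cast hchrom
    _ ≤ _ := this
end
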